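/- arXiv:cond-mat/9905140 — 4 statements merged into one kernel-verified Lean document; each statement's English description precedes it below -/
import Mathlib

section
/- Fix σ = 10, r = 27, β = 8/3 and let 0 < d ≤ 20. Let p = (−a, −a) with a = √(β(r−1)) = √(208/3). Then the map F_d(x,y) = ((σ/d)(x − β r x/(β + x²)) + 2x − y, x) has a homoclinic point to p: there exists a function u : ℤ → ℝ² with u(0) ≠ p, u(k+1) = F_d(u(k)) for all k ∈ ℤ, and u(k) → p both as k → +∞ and as k → −∞. -/
open Filter Topology

/-!
The second coordinate of `F_d` remembers the previous point, so orbits of `F_d` are the solutions of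
`x (k + 1) - 2 x k + x (k - 1) = c f (x k)` with `c = σ / d` and `f x = x - β r x / (β + x²)`.
Such a map is reversible: conjugating it by `(x, y) ↦ (y, x)` inverts it, so an orbit through a
diagonal point `(s, s)` is symmetric in time and converges backward as soon as it converges forward.

The initial value `s ∈ (0, a)` is found by shooting. Either the orbit drops below `-a` while still
strictly decreasing (`overshoots`), or it increases at some time before it ever leaves `(-a, ∞)`
(`turnsBack`); both conditions are open and they exclude each other. For `c ≥ 1/2` the value
`s = 3/2` overshoots and the value `s < a` with `x 1 = -3/2` turns back, so by connectedness some
`s` between them does neither. Its orbit decreases strictly above `-a`, hence converges to a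
negative zero of `f`, which is `-a`.
-/

namespace LorenzHomoclinic

section Reversible

variable {α : Type*} [AddCommGroup α]

def reversibleStep (h : α → α) : Equiv.Perm (α × α) where
  toFun v := (h v.1 - v.2, v.1)
  invFun v := (v.2, h v.2 - v.1)
  left_inv v := by simp
  right_inv v := by simp

variable (h : α → α)

@[simp]
theorem reversibleStep_apply (v : α × α) : reversibleStep h v = (h v.1 - v.2, v.1) := rfl

theorem swap_mul_reversibleStep_mul_swap :
    Equiv.prodComm α α * reversibleStep h * (Equiv.prodComm α α)⁻¹ =
      (reversibleStep h)⁻¹ := by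
  rw [eq_inv_iff_mul_eq_one]
  ext v <;> simp [reversibleStep, Equiv.Perm.mul_apply]

theorem reversibleStep_zpow_neg_apply_swap (k : ℤ) (v : α × α) :
    (reversibleStep h ^ (-k)) v.swap = ((reversibleStep h ^ k) v).swap := by
  have := congrArg (· ^ k) (swap_mul_reversibleStep_mul_swap h)
  simp only [conj_zpow, inv_zpow'] at this
  simpa [Equiv.Perm.mul_apply] using (DFunLike.congr_fun this v.swap).symm

theorem reversibleStep_pow_succ_apply_snd (n : ℕ) (v : α × α) :
    ((reversibleStep h ^ (n + 1)) v).2 = ((reversibleStep h ^ n) v).1 := by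
  rw [pow_succ', Equiv.Perm.mul_apply, reversibleStep_apply]

variable [TopologicalSpace α] {h}

theorem tendsto_reversibleStep_pow_of_fst {v : α × α} {L : α}
    (hL : Tendsto (fun n : ℕ ↦ ((reversibleStep h ^ n) v).1) atTop (𝓝 L)) :
    Tendsto (fun n : ℕ ↦ (reversibleStep h ^ n) v) atTop (𝓝 (L, L)) := by
  refine hL.prodMk_nhds ((tendsto_add_atTop_iff_nat 1).1 ?_)
  exact hL.congr fun n ↦ (reversibleStep_pow_succ_apply_snd h n v).symm

theorem tendsto_reversibleStep_zpow_atTop {v : α × α} {L : α}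
    (hL : Tendsto (fun n : ℕ ↦ ((reversibleStep h ^ n) v).1) atTop (𝓝 L)) :
    Tendsto (fun k : ℤ ↦ (reversibleStep h ^ k) v) atTop (𝓝 (L, L)) := by
  rw [← Nat.map_cast_int_atTop, tendsto_map'_iff]
  simpa [Function.comp_def] using tendsto_reversibleStep_pow_of_fst hL

theorem tendsto_reversibleStep_zpow_atBot {s L : α}
    (hL : Tendsto (fun n : ℕ ↦ ((reversibleStep h ^ n) (s, s)).1) atTop (𝓝 L)) :
    Tendsto (fun k : ℤ ↦ (reversibleStep h ^ k) (s, s)) atBot (𝓝 (L, L)) := by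
  have := (continuous_swap.tendsto (L, L)).comp
    ((tendsto_reversibleStep_zpow_atTop hL).comp tendsto_neg_atBot_atTop)
  refine this.congr fun k ↦ ?_
  simpa using (reversibleStep_zpow_neg_apply_swap h (-k) (s, s)).symm

theorem continuous_reversibleStep [ContinuousSub α] (hh : Continuous h) :
    Continuous (reversibleStep h) :=
  ((hh.comp continuous_fst).sub continuous_snd).prodMk continuous_fst

theorem add_eq_of_tendsto_reversibleStep_pow [T2Space α] [ContinuousSub α] {v : α × α} {L : α}
    (hh : ContinuousAt h L)
    (hL : Tendsto (fun n : ℕ ↦ ((reversibleStep h ^ n) v).1) atTop (𝓝 L)) :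
    h L = L + L := by
  have hfix : Function.IsFixedPt (reversibleStep h) (L, L) := by
    refine isFixedPt_of_tendsto_iterate (x := v) ?_
      (((hh.comp continuousAt_fst).sub continuousAt_snd).prodMk continuousAt_fst)
    simpa only [Equiv.Perm.coe_pow] using tendsto_reversibleStep_pow_of_fst hL
  have := congrArg Prod.fst hfix
  simp only [reversibleStep_apply] at this
  exact sub_eq_iff_eq_add.1 this

end Reversible

theorem isOpen_setOf_forall_lt {X : Type*} [TopologicalSpace X] {p : ℕ → X → Prop}
    (hp : ∀ i, IsOpen {x | p i x}) (j : ℕ) : IsOpen {x | ∀ i < j, p i x} := by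
  simpa only [Set.ofPred_forall, Set.mem_ofPred_eq] using
    (Set.finite_lt_nat j).isOpen_biInter fun i _ ↦ hp i

noncomputable section Lorenz

def lorenzNonlinearity (x : ℝ) : ℝ := x - 8 / 3 * 27 * x / (8 / 3 + x ^ 2)

def lorenzEquilibrium : ℝ := √(208 / 3)

local notation "f" => lorenzNonlinearity
local notation "a" => lorenzEquilibrium

theorem lorenzEquilibrium_sq : a ^ 2 = 208 / 3 := Real.sq_sqrt (by norm_num)

theorem lorenzEquilibrium_pos : 0 < a := Real.sqrt_pos.2 (by norm_num)

theorem three_halves_lt_lorenzEquilibrium : 3 / 2 < a := by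
  nlinarith [lorenzEquilibrium_sq, lorenzEquilibrium_pos]

-- `2061 / 236 = -(3 / 2 + f (3 / 2) / 2)` is `-x 1` for `s = 3 / 2`, `c = 1 / 2`.
theorem lorenzEquilibrium_lt : a < 2061 / 236 := by
  nlinarith [lorenzEquilibrium_sq, lorenzEquilibrium_pos]

theorem lorenzNonlinearity_eq (x : ℝ) : f x = x * (x ^ 2 - a ^ 2) / (8 / 3 + x ^ 2) := by
  rw [lorenzNonlinearity, lorenzEquilibrium_sq]
  field_simp
  ring

@[fun_prop]
theorem continuous_lorenzNonlinearity : Continuous lorenzNonlinearity :=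
  continuous_id.sub <| Continuous.div (by fun_prop) (by fun_prop) fun x ↦ by positivity

theorem lorenzNonlinearity_neg_lorenzEquilibrium : f (-a) = 0 := by
  simp [lorenzNonlinearity_eq]

theorem lorenzNonlinearity_neg {x : ℝ} (hx0 : 0 < x) (hxa : x < a) : f x < 0 := by
  rw [lorenzNonlinearity_eq]
  refine div_neg_of_neg_of_pos (mul_neg_of_pos_of_neg hx0 ?_) (by positivity)
  nlinarith

theorem eq_neg_lorenzEquilibrium_of_lorenzNonlinearity_eq_zero {x : ℝ} (hx : x < 0)
    (hfx : f x = 0) : x = -a := by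
  rw [lorenzNonlinearity_eq, div_eq_zero_iff, mul_eq_zero] at hfx
  rcases hfx with (h | h) | h
  · exact absurd h hx.ne
  · nlinarith [lorenzEquilibrium_pos]
  · nlinarith

def lorenzStep (c : ℝ) : Equiv.Perm (ℝ × ℝ) := reversibleStep fun x ↦ c * f x + 2 * x

def shoot (c s : ℝ) (n : ℕ) : ℝ := ((lorenzStep c ^ n) (s, s)).1

variable {c s : ℝ}

@[simp]
theorem shoot_zero : shoot c s 0 = s := rfl

theorem shoot_one : shoot c s 1 = s + c * f s := by
  simp only [shoot, lorenzStep, pow_one, reversibleStep_apply]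
  ring

theorem shoot_add_two (n : ℕ) :
    shoot c s (n + 2) = c * f (shoot c s (n + 1)) + 2 * shoot c s (n + 1) - shoot c s n := by
  rw [shoot, pow_succ', Equiv.Perm.mul_apply, lorenzStep, reversibleStep_apply,
    reversibleStep_pow_succ_apply_snd]
  rfl

variable (c) in
theorem continuous_shoot (n : ℕ) : Continuous fun s ↦ shoot c s n := by
  have hstep : Continuous (lorenzStep c) := continuous_reversibleStep (by fun_prop)
  simp only [shoot, Equiv.Perm.coe_pow]
  exact continuous_fst.comp ((hstep.iterate n).comp (continuous_id.prodMk continuous_id))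

variable (c) in
def overshoots : Set ℝ :=
  {s | ∃ j, (∀ i < j, shoot c s (i + 1) < shoot c s i) ∧ shoot c s (j + 1) < -a}

variable (c) in
def turnsBack : Set ℝ :=
  {s | ∃ j, (∀ i ≤ j, -a < shoot c s i) ∧ shoot c s j < shoot c s (j + 1)}

variable (c) in
theorem isOpen_overshoots : IsOpen (overshoots c) := by
  simp only [overshoots, Set.ofPred_exists, Set.ofPred_and]
  refine isOpen_iUnion fun j ↦ .inter ?_ (isOpen_lt (continuous_shoot c _) continuous_const)
  exact isOpen_setOf_forall_lt (fun i ↦ isOpen_lt (continuous_shoot c _) (continuous_shoot c _)) j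

variable (c) in
theorem isOpen_turnsBack : IsOpen (turnsBack c) := by
  simp only [turnsBack, Set.ofPred_exists, Set.ofPred_and, Nat.le_iff_lt_add_one]
  refine isOpen_iUnion fun j ↦ .inter ?_ (isOpen_lt (continuous_shoot c _) (continuous_shoot c _))
  exact isOpen_setOf_forall_lt (fun i ↦ isOpen_lt continuous_const (continuous_shoot c _)) _

variable (c) in
theorem disjoint_overshoots_turnsBack : Disjoint (overshoots c) (turnsBack c) := by
  refine Set.disjoint_left.2 fun s ⟨j, hdesc, hbelow⟩ ⟨k, habove, hrise⟩ ↦ ?_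
  rcases lt_trichotomy j k with hjk | rfl | hkj
  · exact (habove (j + 1) hjk).not_gt hbelow
  · linarith [habove j le_rfl]
  · exact (hdesc k hkj).not_gt hrise

theorem mem_overshoots_of_shoot_succ_eq {k : ℕ}
    (hdesc : ∀ i < k, shoot c s (i + 1) < shoot c s i) (hk : -a < shoot c s k)
    (heq : shoot c s (k + 1) = -a) : s ∈ overshoots c := by
  refine ⟨k + 1, fun i hi ↦ ?_, ?_⟩
  · rcases Nat.lt_succ_iff_lt_or_eq.1 hi with hi | rfl
    exacts [hdesc i hi, heq ▸ hk]
  · rw [shoot_add_two, heq, lorenzNonlinearity_neg_lorenzEquilibrium]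
    linarith

theorem mem_turnsBack_of_shoot_add_two_eq {m : ℕ} (hdesc : shoot c s (m + 1) < shoot c s m)
    (habove : ∀ i ≤ m + 1, -a < shoot c s i) (heq : shoot c s (m + 2) = shoot c s (m + 1)) :
    s ∈ turnsBack c := by
  have hpush : 0 < c * f (shoot c s (m + 1)) := by linarith [shoot_add_two (c := c) (s := s) m]
  refine ⟨m + 2, fun i hi ↦ ?_, ?_⟩
  · rcases Nat.lt_or_eq_of_le hi with hi | rfl
    exacts [habove i (by omega), heq ▸ habove (m + 1) le_rfl]
  · have hnext : shoot c s (m + 3) =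
        c * f (shoot c s (m + 2)) + 2 * shoot c s (m + 2) - shoot c s (m + 1) := shoot_add_two _
    rw [heq] at hnext
    show shoot c s (m + 2) < shoot c s (m + 3)
    linarith

theorem shoot_succ_mem_Ioo (hc : 0 < c) (hs0 : 0 < s) (hsa : s < a) (hA : s ∉ overshoots c)
    (hB : s ∉ turnsBack c) (k : ℕ) : shoot c s (k + 1) ∈ Set.Ioo (-a) (shoot c s k) := by
  induction k using Nat.strong_induction_on with | _ k ih =>
  have habove : ∀ i ≤ k, -a < shoot c s i := fun
    | 0, _ => by rw [shoot_zero]; linarith [lorenzEquilibrium_pos]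
    | i + 1, hi => (ih i hi).1
  have hdesc : ∀ i < k, shoot c s (i + 1) < shoot c s i := fun i hi ↦ (ih i hi).2
  have hle : shoot c s (k + 1) ≤ shoot c s k := not_lt.1 fun h ↦ hB ⟨k, habove, h⟩
  have hge : -a ≤ shoot c s (k + 1) := not_lt.1 fun h ↦ hA ⟨k, hdesc, h⟩
  refine ⟨hge.lt_of_ne fun h ↦ hA ?_, hle.lt_of_ne fun h ↦ ?_⟩
  · exact mem_overshoots_of_shoot_succ_eq hdesc (habove k le_rfl) h.symm
  · cases k with
    | zero =>
      rw [zero_add, shoot_one, shoot_zero] at h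
      nlinarith [lorenzNonlinearity_neg hs0 hsa]
    | succ m => exact hB (mem_turnsBack_of_shoot_add_two_eq (hdesc m m.lt_succ_self) habove h)

theorem lt_zero_of_tendsto_shoot (hc : 0 < c) (hsa : s < a) (hanti : StrictAnti (shoot c s))
    {L : ℝ} (hL : Tendsto (shoot c s) atTop (𝓝 L)) : L < 0 := by
  by_contra! hL0
  have hpos : ∀ n, 0 < shoot c s n := fun n ↦
    hL0.trans_lt <| (hanti.antitone.le_of_tendsto hL (n + 1)).trans_lt (hanti n.lt_succ_self)
  have hpush : ∀ n, c * f (shoot c s n) < 0 := fun n ↦ mul_neg_of_pos_of_neg hc <|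
    lorenzNonlinearity_neg (hpos n) ((hanti.antitone n.zero_le).trans_lt hsa)
  -- the increments decrease while the orbit stays in `(0, a)`, but they must tend to `0`
  have hincr : Antitone fun n ↦ shoot c s (n + 1) - shoot c s n :=
    antitone_nat_of_succ_le fun n ↦ by linarith [shoot_add_two (c := c) (s := s) n, hpush (n + 1)]
  have hincr_lim : Tendsto (fun n ↦ shoot c s (n + 1) - shoot c s n) atTop (𝓝 0) := by
    simpa using ((tendsto_add_atTop_iff_nat 1).2 hL).sub hL
  have hfirst := hincr.le_of_tendsto hincr_lim 0
  have hpush0 := hpush 0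
  rw [zero_add, shoot_one, shoot_zero] at hfirst
  rw [shoot_zero] at hpush0
  linarith

theorem tendsto_shoot_of_forall_mem_Ioo (hc : 0 < c) (hsa : s < a)
    (hdesc : ∀ k, shoot c s (k + 1) ∈ Set.Ioo (-a) (shoot c s k)) :
    Tendsto (shoot c s) atTop (𝓝 (-a)) := by
  have hanti : StrictAnti (shoot c s) := strictAnti_nat_of_succ_lt fun k ↦ (hdesc k).2
  have hbdd : BddBelow (Set.range (shoot c s)) :=
    ⟨-a, by rintro _ ⟨k, rfl⟩; exact ((hdesc k).1.trans (hdesc k).2).le⟩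
  have hL := tendsto_atTop_ciInf hanti.antitone hbdd
  have hfix := add_eq_of_tendsto_reversibleStep_pow
    (h := fun x ↦ c * f x + 2 * x) (by fun_prop) hL
  have hfL : f (⨅ k, shoot c s k) = 0 := by
    simpa [hc.ne'] using (show c * f (⨅ k, shoot c s k) = 0 by linarith)
  rwa [← eq_neg_lorenzEquilibrium_of_lorenzNonlinearity_eq_zero
    (lt_zero_of_tendsto_shoot hc hsa hanti hL) hfL]

theorem three_halves_mem_overshoots (hc : 1 / 2 ≤ c) : 3 / 2 ∈ overshoots c := by
  refine ⟨0, fun i hi ↦ absurd hi i.not_lt_zero, ?_⟩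
  rw [zero_add, shoot_one, show f (3 / 2) = -(2415 / 118) by norm_num [lorenzNonlinearity]]
  linarith [lorenzEquilibrium_lt]

theorem exists_mem_turnsBack (hc : 1 / 2 ≤ c) :
    ∃ s, 3 / 2 ≤ s ∧ s < a ∧ s ∈ turnsBack c := by
  have hleft : shoot c (3 / 2) 1 ≤ -(3 / 2) := by
    rw [shoot_one, show f (3 / 2) = -(2415 / 118) by norm_num [lorenzNonlinearity]]
    linarith
  have hright : shoot c a 1 = a := by simp [shoot_one, lorenzNonlinearity_eq]
  obtain ⟨s, hs, hs1⟩ := intermediate_value_Icc three_halves_lt_lorenzEquilibrium.le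
    (continuous_shoot c 1).continuousOn
    ⟨hleft, by rw [hright]; linarith [lorenzEquilibrium_pos]⟩
  dsimp only at hs1
  have hsa : s < a := hs.2.lt_of_ne fun h ↦ by
    rw [h, hright] at hs1
    linarith [lorenzEquilibrium_pos]
  refine ⟨s, hs.1, hsa, 1, fun i hi ↦ ?_, ?_⟩
  · interval_cases i
    · rw [shoot_zero]; linarith [hs.1, lorenzEquilibrium_pos]
    · rw [hs1]; linarith [three_halves_lt_lorenzEquilibrium]
  · rw [shoot_add_two, zero_add, hs1, shoot_zero,
      show f (-(3 / 2)) = 2415 / 118 by norm_num [lorenzNonlinearity]]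
    linarith [lorenzEquilibrium_lt]

theorem exists_tendsto_shoot (hc : 1 / 2 ≤ c) :
    ∃ s, 0 < s ∧ Tendsto (shoot c s) atTop (𝓝 (-a)) := by
  have hc0 : 0 < c := by linarith
  obtain ⟨t, ht, hta, htB⟩ := exists_mem_turnsBack hc
  by_contra! hno
  have hcover : Set.Icc (3 / 2) t ⊆ overshoots c ∪ turnsBack c := fun s hs ↦ by
    by_contra hs'
    rw [Set.mem_union, not_or] at hs'
    have hs0 : 0 < s := by linarith [hs.1]
    have hsa : s < a := hs.2.trans_lt hta
    exact hno s hs0 <| tendsto_shoot_of_forall_mem_Ioo hc0 hsa <|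
      shoot_succ_mem_Ioo hc0 hs0 hsa hs'.1 hs'.2
  have hsub := isPreconnected_Icc.subset_left_of_subset_union (isOpen_overshoots c)
    (isOpen_turnsBack c) (disjoint_overshoots_turnsBack c) hcover
    ⟨3 / 2, ⟨le_rfl, ht⟩, three_halves_mem_overshoots hc⟩
  exact Set.disjoint_left.1 (disjoint_overshoots_turnsBack c) (hsub ⟨ht, le_rfl⟩) htB

end Lorenz

end LorenzHomoclinic

open LorenzHomoclinic in
/-- With σ = 10, r = 27, β = 8/3 and `0 < d ≤ 20`, the map
`F_d(x,y) = ((σ/d)(x − βrx/(β + x²)) + 2x − y, x)` has a homoclinic point to its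
fixed point `p = (−a, −a)`, `a = √(β(r−1)) = √(208/3)`: a full orbit distinct
from `p` converging to `p` in both forward and backward time. -/
theorem stmt11 (d : ℝ) (hd0 : 0 < d) (hd20 : d ≤ 20)
    (F : ℝ × ℝ → ℝ × ℝ)
    (hF : ∀ x y : ℝ,
      F (x, y) = ((10 / d) * (x - (8 / 3) * 27 * x / (8 / 3 + x ^ 2)) + 2 * x - y, x)) :
    ∃ u : ℤ → ℝ × ℝ,
      u 0 ≠ (-Real.sqrt (208 / 3), -Real.sqrt (208 / 3)) ∧
      (∀ k : ℤ, u (k + 1) = F (u k)) ∧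
      Tendsto u atTop (𝓝 (-Real.sqrt (208 / 3), -Real.sqrt (208 / 3))) ∧
      Tendsto u atBot (𝓝 (-Real.sqrt (208 / 3), -Real.sqrt (208 / 3))) := by
  have hc : 1 / 2 ≤ 10 / d := by rw [le_div_iff₀ hd0]; linarith
  obtain ⟨s, hs, hlim⟩ := exists_tendsto_shoot hc
  have hstep : ∀ v, lorenzStep (10 / d) v = F v := fun ⟨x, y⟩ ↦ by rw [hF]; rfl
  refine ⟨fun k ↦ (lorenzStep (10 / d) ^ k) (s, s), fun h ↦ ?_, fun k ↦ ?_,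
    tendsto_reversibleStep_zpow_atTop hlim, tendsto_reversibleStep_zpow_atBot hlim⟩
  · have h1 : s = -lorenzEquilibrium := congrArg Prod.fst h
    linarith [lorenzEquilibrium_pos]
  · dsimp only
    rw [add_comm, zpow_one_add, Equiv.Perm.mul_apply, hstep]
end

section
/- Fix σ = 10, r = 27, β = 8/3 and let 0 < d ≤ 20. Then the map F_d(x,y) = ((σ/d)(x − β r x/(β + x²)) + 2x − y, x) has infinitely many periodic points: the set {w ∈ ℝ² : there exists n ≥ 1 with F_d^[n](w) = w} is infinite. -/
/-!
Orbits of `F(x, y) = (φ x + 2x - y, x)` are the solutions of the recurrence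
`z (i + 1) + z (i - 1) = φ (z i) + 2 z i`, the Euler–Lagrange equation of the discrete action
`∑ (z (i + 1) - z i)² / 2 + V (z i)` with `V' = φ`. On the finite-dimensional space of
`m`-antiperiodic sequences this action is coercive, so it has a minimiser, and since `φ` is odd the
minimiser solves the recurrence. Once `m` is large the constant sequence `1` has negative action,
so the minimiser is not `0`; it gives a point `w` with `F^[m] w = -w ≠ w` and `F^[2m] w = w`.
For `m = 2 ^ j` this is a point of minimal period `2 ^ (j + 1)`, for every large `j`.
-/

open Function Finset Filter

noncomputable section

lemma Function.Periodic.sum_range_comp_add_one {M : Type*} [AddCancelCommMonoid M] {f : ℤ → M}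
    {m : ℕ} (hf : Periodic f m) : ∑ i ∈ range m, f (i + 1) = ∑ i ∈ range m, f i := by
  have h := (sum_range_succ' (fun i : ℕ => f i) m).symm.trans (sum_range_succ (fun i : ℕ => f i) m)
  push_cast at h
  rw [← zero_add (m : ℤ), hf 0] at h
  exact add_right_cancel h

lemma Function.Antiperiodic.eq_zero_of_forall_lt {β : Type*} [Ring β] [NoZeroDivisors β]
    {f : ℤ → β} {m : ℕ} (hf : Antiperiodic f m) (hm : 0 < m) (h : ∀ n < m, f n = 0) (i : ℤ) :
    f i = 0 := by
  obtain ⟨j, ⟨hj0, hjm⟩, hj⟩ := (hf.mul hf).exists_mem_Ico₀ (by exact_mod_cast hm) i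
  lift j to ℕ using hj0
  exact mul_self_eq_zero.1 (hj.trans (by simp [h j (by exact_mod_cast hjm)]))

lemma iterate_eq_of_recurrence {α : Type*} [AddCommGroup α] {g : α → α} {F : α × α → α × α}
    (hF : ∀ x y, F (x, y) = (g x - y, x)) {z : ℤ → α}
    (hz : ∀ i, z (i + 1) + z (i - 1) = g (z i)) (n : ℕ) :
    F^[n] (z 1, z 0) = (z (n + 1), z n) := by
  induction n with
  | zero => simp
  | succ n ih =>
    rw [iterate_succ_apply', ih, hF, ← hz]
    push_cast
    simp

lemma infinite_periodicPts_of_forall_le_minimalPeriod {α : Type*} {f : α → α}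
    (h : ∀ N, ∃ x, N ≤ minimalPeriod f x) : (periodicPts f).Infinite := by
  intro hfin
  obtain ⟨B, hB⟩ := (hfin.image (minimalPeriod f)).bddAbove
  obtain ⟨x, hx⟩ := h (B + 1)
  have hx_mem : x ∈ periodicPts f := minimalPeriod_pos_iff_mem_periodicPts.1 (by omega)
  have := hB ⟨x, hx_mem, rfl⟩
  omega

-- Identifies `ZMod m → ℝ` with the `m`-antiperiodic sequences.
def antiperiodicExtend (m : ℕ) : (ZMod m → ℝ) →ₗ[ℝ] ℤ → ℝ where
  toFun u i := (-1) ^ (i / m) * u i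
  map_add' u v := by ext i; simp [mul_add]
  map_smul' t u := by ext i; simp [mul_left_comm]

section antiperiodicExtend

variable {m : ℕ}

lemma antiperiodicExtend_apply (u : ZMod m → ℝ) (i : ℤ) :
    antiperiodicExtend m u i = (-1) ^ (i / m) * u i :=
  rfl

lemma antiperiodicExtend_natCast_of_lt (u : ZMod m → ℝ) {n : ℕ} (hn : n < m) :
    antiperiodicExtend m u n = u n := by
  simp [antiperiodicExtend_apply, Int.ediv_eq_zero_of_lt (Int.natCast_nonneg n)
    (by exact_mod_cast hn : (n : ℤ) < m)]

variable [NeZero m]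

lemma antiperiodicExtend_val (u : ZMod m → ℝ) (j : ZMod m) :
    antiperiodicExtend m u j.val = u j := by
  rw [antiperiodicExtend_natCast_of_lt u (ZMod.val_lt j), ZMod.natCast_zmod_val]

lemma antiperiodic_antiperiodicExtend (u : ZMod m → ℝ) :
    Antiperiodic (antiperiodicExtend m u) m := by
  intro i
  have hm : (m : ℤ) ≠ 0 := by exact_mod_cast NeZero.ne m
  simp [antiperiodicExtend_apply, Int.add_ediv_of_dvd_right dvd_rfl, Int.ediv_self hm,
    zpow_add_one₀]

lemma sq_norm_le_sum_sq_antiperiodicExtend (u : ZMod m → ℝ) :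
    ‖u‖ ^ 2 ≤ ∑ i ∈ range m, antiperiodicExtend m u i ^ 2 := by
  set S := ∑ i ∈ range m, antiperiodicExtend m u i ^ 2
  have hnorm : ‖u‖ ≤ √S := (pi_norm_le_iff_of_nonneg (Real.sqrt_nonneg S)).2 fun j => by
    rw [Real.norm_eq_abs, ← Real.sqrt_sq_eq_abs, ← antiperiodicExtend_val u j]
    exact Real.sqrt_le_sqrt (single_le_sum (f := fun i : ℕ => antiperiodicExtend m u i ^ 2)
      (fun i _ => sq_nonneg _) (mem_range.2 (ZMod.val_lt j)))
  calc ‖u‖ ^ 2 ≤ √S ^ 2 := by gcongr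
    _ = S := Real.sq_sqrt (sum_nonneg fun i _ => sq_nonneg _)

end antiperiodicExtend

def discreteAction (V : ℝ → ℝ) (m : ℕ) (z : ℤ → ℝ) : ℝ :=
  ∑ i ∈ range m, ((z (i + 1) - z i) ^ 2 / 2 + V (z i))

section discreteAction

variable {V φ : ℝ → ℝ} {m : ℕ}

theorem hasDerivAt_discreteAction (hV : ∀ x, HasDerivAt V (φ x) x) {z ε : ℤ → ℝ}
    (hz : Antiperiodic z m) (hε : Antiperiodic ε m) :
    HasDerivAt (fun t : ℝ => discreteAction V m (z + t • ε))
      (∑ i ∈ range m, (2 * z i - z (i - 1) - z (i + 1) + φ (z i)) * ε i) 0 := by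
  have hline : ∀ i, HasDerivAt (fun t : ℝ => (z + t • ε) i) (ε i) 0 := fun i => by
    simpa using ((hasDerivAt_id (0 : ℝ)).smul_const (ε i)).const_add (z i)
  have hterm : ∀ i : ℤ, HasDerivAt (fun t : ℝ => ((z + t • ε) (i + 1) - (z + t • ε) i) ^ 2 / 2
      + V ((z + t • ε) i)) ((z (i + 1) - z i) * (ε (i + 1) - ε i) + φ (z i) * ε i) 0 := fun i =>
    (((((hline (i + 1)).sub (hline i)).pow 2).div_const 2).add
      ((hV ((z + (0 : ℝ) • ε) i)).comp 0 (hline i))).congr_deriv (by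
      simp only [Pi.add_apply, Pi.smul_apply, smul_eq_mul, Pi.sub_apply, zero_mul, add_zero,
        Nat.add_one_sub_one, pow_one, zero_smul, Pi.zero_apply, Nat.cast_ofNat]
      ring)
  -- Summation by parts.
  have hshift : Periodic (fun i => (z i - z (i - 1)) * ε i) m := fun i => by
    simp only [show i + m - 1 = i - 1 + m by ring, hz i, hz (i - 1), hε i]
    ring
  unfold discreteAction
  refine (HasDerivAt.fun_sum fun i (_ : i ∈ range m) => hterm i).congr_deriv ?_
  symm
  calc _ = ∑ i ∈ range m, (z i - z (i - 1)) * ε i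
        + ∑ i ∈ range m, (z i - z (i + 1) + φ (z i)) * ε i := by
          rw [← sum_add_distrib]; exact sum_congr rfl fun i _ => by ring
    _ = _ := by
          rw [← hshift.sum_range_comp_add_one, ← sum_add_distrib]
          exact sum_congr rfl fun i _ => by simp only [add_sub_cancel_right]; ring

lemma discreteAction_antiperiodicExtend_const [NeZero m] (a : ℝ) :
    discreteAction V m (antiperiodicExtend m fun _ => a) = m * V a + 2 * a ^ 2 := by
  have hz : ∀ n < m, antiperiodicExtend m (fun _ => a) n = a := fun n hn =>
    antiperiodicExtend_natCast_of_lt _ hn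
  have hzm : antiperiodicExtend m (fun _ => a) m = -a := by
    have h0 := hz 0 (NeZero.pos m)
    push_cast at h0
    rw [← zero_add (m : ℤ), antiperiodic_antiperiodicExtend, h0]
  obtain ⟨k, rfl⟩ := Nat.exists_eq_add_one_of_ne_zero (NeZero.ne m)
  rw [discreteAction, sum_range_succ, sum_congr rfl fun i hi => by
    rw [← Nat.cast_succ, hz (i + 1) (by simp at hi; omega), hz i (by simp at hi; omega)]]
  push_cast at hzm ⊢
  rw [hzm, hz k (by omega)]
  simp only [sub_self, ne_eq, OfNat.ofNat_ne_zero, not_false_eq_true, zero_pow, zero_div, zero_add,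
    sum_const, card_range, nsmul_eq_mul]
  ring

theorem exists_forall_discreteAction_le [NeZero m] (hV : Continuous V)
    {a b : ℝ} (ha : 0 < a) (hVb : ∀ x, a * x ^ 2 - b ≤ V x) :
    ∃ u : ZMod m → ℝ, ∀ v, discreteAction V m (antiperiodicExtend m u) ≤
      discreteAction V m (antiperiodicExtend m v) := by
  have hz : ∀ i, Continuous fun u : ZMod m → ℝ => antiperiodicExtend m u i := fun i =>
    (continuous_apply i).comp (antiperiodicExtend m).continuous_of_finiteDimensional
  refine Continuous.exists_forall_le (continuous_finsetSum _ fun i _ => by fun_prop) ?_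
  have hlow : ∀ u, a * ‖u‖ ^ 2 + -(m * b) ≤ discreteAction V m (antiperiodicExtend m u) :=
    fun u => calc
      a * ‖u‖ ^ 2 + -(m * b) ≤ ∑ i ∈ range m, (a * antiperiodicExtend m u i ^ 2 - b) := by
        rw [sum_sub_distrib, ← mul_sum, sum_const, card_range, nsmul_eq_mul, ← sub_eq_add_neg]
        gcongr
        exact sq_norm_le_sum_sq_antiperiodicExtend u
      _ ≤ _ := sum_le_sum fun i _ => by
        linarith [hVb (antiperiodicExtend m u i),
          sq_nonneg (antiperiodicExtend m u (i + 1) - antiperiodicExtend m u i)]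
  exact tendsto_atTop_mono hlow <| tendsto_atTop_add_const_right _ _ <|
    ((tendsto_pow_atTop two_ne_zero).comp tendsto_norm_cocompact_atTop).const_mul_atTop ha

theorem euler_lagrange_of_forall_discreteAction_le [NeZero m] (hV : ∀ x, HasDerivAt V (φ x) x)
    (hφ : ∀ x, φ (-x) = -φ x) {u : ZMod m → ℝ}
    (hu : ∀ v, discreteAction V m (antiperiodicExtend m u) ≤
      discreteAction V m (antiperiodicExtend m v)) (i : ℤ) :
    antiperiodicExtend m u (i + 1) + antiperiodicExtend m u (i - 1) =
      φ (antiperiodicExtend m u i) + 2 * antiperiodicExtend m u i := by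
  set z := antiperiodicExtend m u
  have hz : Antiperiodic z m := antiperiodic_antiperiodicExtend u
  set r : ℤ → ℝ := fun i => 2 * z i - z (i - 1) - z (i + 1) + φ (z i) with hr
  have hr_anti : Antiperiodic r m := fun i => by
    simp only [hr, hz i, hφ, show i + m - 1 = i - 1 + m by ring,
      show i + m + 1 = i + 1 + m by ring, hz (i - 1), hz (i + 1)]
    ring
  -- Differentiating in the direction whose extension is `r` gives `∑ r i ^ 2 = 0`.
  set v : ZMod m → ℝ := fun j => r j.val
  have hv : ∀ n < m, antiperiodicExtend m v n = r n := fun n hn => by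
    rw [antiperiodicExtend_natCast_of_lt v hn]
    show r ((n : ZMod m).val : ℤ) = r n
    rw [ZMod.val_natCast, Nat.mod_eq_of_lt hn]
  have hmin : IsLocalMin (fun t : ℝ => discreteAction V m (z + t • antiperiodicExtend m v)) 0 :=
    Eventually.of_forall fun t => by
      have := hu (u + t • v)
      rw [map_add, map_smul] at this
      simpa only [zero_smul, add_zero] using this
  have hsum := hmin.hasDerivAt_eq_zero
    (hasDerivAt_discreteAction hV hz (antiperiodic_antiperiodicExtend v))
  rw [sum_congr rfl fun n hn => by rw [hv n (mem_range.1 hn)]] at hsum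
  have hr0 : ∀ n < m, r n = 0 := fun n hn => mul_self_eq_zero.1 <|
    (sum_eq_zero_iff_of_nonneg fun i _ => mul_self_nonneg _).1 hsum n (mem_range.2 hn)
  have hri := hr_anti.eq_zero_of_forall_lt (NeZero.pos m) hr0 i
  simp only [hr] at hri
  linarith

end discreteAction

-- `F_d (x, y) = (lorenzForce (σ / d) x + 2 x - y, x)`.
def lorenzForce (c x : ℝ) : ℝ := c * (x - 8 / 3 * 27 * x / (8 / 3 + x ^ 2))

-- A primitive of `lorenzForce c` vanishing at `0`; `36 = βr / 2`.
def lorenzPotential (c x : ℝ) : ℝ := c * (x ^ 2 / 2 - 36 * Real.log (1 + 3 * x ^ 2 / 8))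

section lorenz

variable (c : ℝ)

lemma lorenzForce_neg (x : ℝ) : lorenzForce c (-x) = -lorenzForce c x := by
  simp only [lorenzForce]; ring

lemma hasDerivAt_lorenzPotential (x : ℝ) :
    HasDerivAt (lorenzPotential c) (lorenzForce c x) x := by
  have hpos : 0 < 1 + 3 * x ^ 2 / 8 := by positivity
  have := (((hasDerivAt_pow 2 x).div_const 2).sub
    ((((hasDerivAt_pow 2 x).const_mul 3).div_const 8).const_add 1 |>.log hpos.ne'
      |>.const_mul 36)).const_mul c
  refine this.congr_deriv ?_
  simp only [lorenzForce]
  field_simp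
  ring

lemma continuous_lorenzPotential : Continuous (lorenzPotential c) :=
  continuous_iff_continuousAt.2 fun x => (hasDerivAt_lorenzPotential c x).continuousAt

variable {c}

lemma le_lorenzPotential (hc : 0 ≤ c) (x : ℝ) :
    c / 4 * x ^ 2 - c * (36 * Real.log 54) ≤ lorenzPotential c x := by
  have hlog := Real.log_le_sub_one_of_pos (x := (1 + 3 * x ^ 2 / 8) / 54) (by positivity)
  rw [Real.log_div (by positivity) (by norm_num)] at hlog
  rw [lorenzPotential, mul_sub, ← mul_assoc]
  nlinarith [mul_le_mul_of_nonneg_left hlog hc]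

lemma lorenzPotential_one_le (hc : 0 ≤ c) : lorenzPotential c 1 ≤ -9 * c := by
  have := Real.one_sub_inv_le_log_of_pos (x := 11 / 8) (by norm_num)
  rw [lorenzPotential]
  norm_num at this ⊢
  nlinarith

end lorenz

theorem exists_antiperiodic_lorenz_solution {c : ℝ} (hc : 0 < c) {m : ℕ} [NeZero m]
    (hm : 2 < 9 * c * m) :
    ∃ z : ℤ → ℝ, Antiperiodic z m ∧ (∀ i, z (i + 1) + z (i - 1) = lorenzForce c (z i) + 2 * z i) ∧
      ∃ n : ℕ, z n ≠ 0 := by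
  obtain ⟨u, hu⟩ := exists_forall_discreteAction_le (m := m) (continuous_lorenzPotential c)
    (by positivity : 0 < c / 4) (le_lorenzPotential hc.le)
  refine ⟨_, antiperiodic_antiperiodicExtend u, euler_lagrange_of_forall_discreteAction_le
    (hasDerivAt_lorenzPotential c) (lorenzForce_neg c) hu, ?_⟩
  -- Otherwise `u = 0`, whose action `0` exceeds the action `m V(1) + 2 < 0` of the constant `1`.
  by_contra! h
  have hu0 : u = fun _ => 0 := funext fun j => by rw [← antiperiodicExtend_val u j, h]
  have := hu fun _ => 1
  rw [hu0, discreteAction_antiperiodicExtend_const, discreteAction_antiperiodicExtend_const] at this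
  rw [show lorenzPotential c 0 = 0 by simp [lorenzPotential]] at this
  linarith [mul_le_mul_of_nonneg_left (lorenzPotential_one_le hc.le) (Nat.cast_nonneg m)]

theorem exists_minimalPeriod_lorenz_eq_two_pow {c : ℝ} (hc : 0 < c) {F : ℝ × ℝ → ℝ × ℝ}
    (hF : ∀ x y, F (x, y) = (lorenzForce c x + 2 * x - y, x)) {j : ℕ} (hj : 2 < 9 * c * 2 ^ j) :
    ∃ w, minimalPeriod F w = 2 ^ (j + 1) := by
  obtain ⟨z, hz, hrec, n, hn⟩ := exists_antiperiodic_lorenz_solution hc (m := 2 ^ j)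
    (by exact_mod_cast hj)
  have horb := iterate_eq_of_recurrence (g := fun x => lorenzForce c x + 2 * x) hF hrec
  refine ⟨(z 1, z 0), minimalPeriod_eq_prime_pow ?_ ?_⟩
  · intro hper
    rw [IsPeriodicPt, IsFixedPt, horb, add_comm, hz, ← zero_add ((2 ^ j : ℕ) : ℤ), hz] at hper
    obtain ⟨h1, h0⟩ := Prod.mk.inj hper
    have hF0 : F (0, 0) = (0, 0) := by simpa [lorenzForce] using hF 0 0
    have := horb n
    rw [show z 1 = 0 by linarith, show z 0 = 0 by linarith, iterate_fixed hF0] at this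
    exact hn (congrArg Prod.snd this).symm
  · have hp : Periodic z (2 ^ (j + 1) : ℕ) := by
      push_cast [pow_succ, mul_comm]
      exact hz.periodic_two_mul
    rw [IsPeriodicPt, IsFixedPt, horb, add_comm, hp, ← zero_add ((2 ^ (j + 1) : ℕ) : ℤ), hp]

theorem stmt12_general (d : ℝ) (hd0 : 0 < d)
    (F : ℝ × ℝ → ℝ × ℝ)
    (hF : ∀ x y : ℝ,
      F (x, y) = ((10 / d) * (x - (8 / 3) * 27 * x / (8 / 3 + x ^ 2)) + 2 * x - y, x)) :
    {w : ℝ × ℝ | ∃ n : ℕ, 1 ≤ n ∧ F^[n] w = w}.Infinite := by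
  have hc : 0 < 10 / d := by positivity
  refine infinite_periodicPts_of_forall_le_minimalPeriod fun N => ?_
  obtain ⟨j, hj⟩ := pow_unbounded_of_one_lt (max (N : ℝ) (2 / (9 * (10 / d)))) one_lt_two
  obtain ⟨w, hw⟩ := exists_minimalPeriod_lorenz_eq_two_pow hc hF (j := j)
    ((div_lt_iff₀' (by positivity)).1 ((le_max_right _ _).trans_lt hj))
  have hN : N < 2 ^ j := by exact_mod_cast (le_max_left _ _).trans_lt hj
  exact ⟨w, by rw [hw, pow_succ]; omega⟩

/-- With σ = 10, r = 27, β = 8/3 and `0 < d ≤ 20`, the map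
`F_d(x,y) = ((σ/d)(x − βrx/(β + x²)) + 2x − y, x)` has infinitely many periodic
points. -/
theorem stmt12 (d : ℝ) (hd0 : 0 < d) (hd20 : d ≤ 20)
    (F : ℝ × ℝ → ℝ × ℝ)
    (hF : ∀ x y : ℝ,
      F (x, y) = ((10 / d) * (x - (8 / 3) * 27 * x / (8 / 3 + x ^ 2)) + 2 * x - y, x)) :
    {w : ℝ × ℝ | ∃ n : ℕ, 1 ≤ n ∧ F^[n] w = w}.Infinite :=
  stmt12_general d hd0 F hF
end
end

section
/- Let m ≥ 1, K ≥ 1, d ∈ ℝ, and let M₁, …, M_K be m × m real matrices (viewed as complex matrices). For t ∈ ℝ let E⁺(t) and E⁻(t) be the m × m complex matrices whose only nonzero entry is d·e^{it}, respectively d·e^{−it}, in position (1,1). Let A(t) be the Km × Km block tridiagonal complex matrix (without corner blocks) with diagonal blocks M₁, …, M_K, superdiagonal blocks E⁺(t), subdiagonal blocks E⁻(t), and all other blocks zero. Then the characteristic polynomial of A(t) does not depend on t: det(λ I − A(t)) = det(λ I − A(0)) for all t ∈ ℝ and all λ ∈ ℂ. -/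
/-- The characteristic polynomial (here `det(λI − A(t))`) of the
block tridiagonal matrix `A(t)` with diagonal blocks `M₁, …, M_K` (real) and
off-diagonal coupling blocks having the single entry `d·e^{±it}` in position
(1,1), and no corner blocks, does not depend on `t`. -/
theorem stmt17 (m K : ℕ) (hm : 1 ≤ m) (hK : 1 ≤ K) (d : ℝ)
    (Mb : Fin K → Matrix (Fin m) (Fin m) ℝ)
    (A : ℝ → Matrix (Fin K × Fin m) (Fin K × Fin m) ℂ)
    (hA : ∀ (t : ℝ) (j j' : Fin K) (a b : Fin m),
      A t (j, a) (j', b) =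
        if j' = j then ((Mb j a b : ℝ) : ℂ)
        else if (j' : ℕ) = (j : ℕ) + 1 then
          (if (a : ℕ) = 0 ∧ (b : ℕ) = 0 then (d : ℂ) * Complex.exp ((t : ℂ) * Complex.I) else 0)
        else if (j : ℕ) = (j' : ℕ) + 1 then
          (if (a : ℕ) = 0 ∧ (b : ℕ) = 0 then (d : ℂ) * Complex.exp (-((t : ℂ) * Complex.I)) else 0)
        else 0) :
    ∀ (t : ℝ) (lam : ℂ),
      (lam • (1 : Matrix (Fin K × Fin m) (Fin K × Fin m) ℂ) - A t).det =
      (lam • (1 : Matrix (Fin K × Fin m) (Fin K × Fin m) ℂ) - A 0).det := by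
  intro t lam
  set c : ℂ := (t : ℂ) * Complex.I with hc
  set D : Matrix (Fin K × Fin m) (Fin K × Fin m) ℂ :=
    Matrix.diagonal (fun p => Complex.exp (c * ((p.1 : ℕ) : ℂ))) with hD
  have hDdet : D.det ≠ 0 := by
    rw [hD, Matrix.det_diagonal]
    exact Finset.prod_ne_zero_iff.mpr fun p _ => Complex.exp_ne_zero _
  have key : D * (lam • (1 : Matrix (Fin K × Fin m) (Fin K × Fin m) ℂ) - A t)
      = (lam • (1 : Matrix (Fin K × Fin m) (Fin K × Fin m) ℂ) - A 0) * D := by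
    ext ⟨j, a⟩ ⟨j', b⟩
    rw [hD, Matrix.diagonal_mul, Matrix.mul_diagonal]
    simp only [Matrix.sub_apply, Matrix.smul_apply, Matrix.one_apply, smul_eq_mul,
      hA t j j' a b, hA 0 j j' a b]
    simp only [Complex.ofReal_zero, zero_mul, neg_zero, Complex.exp_zero, mul_one]
    by_cases h1 : j' = j
    · subst h1
      simp only [if_pos rfl, if_true]
      ring
    · simp only [if_neg h1]
      have hne : ((j, a) : Fin K × Fin m) ≠ (j', b) := fun h => h1 (congrArg Prod.fst h).symm
      simp only [if_neg hne]
      by_cases h2 : (j' : ℕ) = (j : ℕ) + 1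
      · simp only [if_pos h2]
        by_cases h3 : (a : ℕ) = 0 ∧ (b : ℕ) = 0
        · simp only [if_pos h3]
          have : ((j' : ℕ) : ℂ) = ((j : ℕ) : ℂ) + 1 := by rw [h2]; push_cast; ring
          rw [this]
          rw [show c * (((j : ℕ) : ℂ) + 1) = c * ((j : ℕ) : ℂ) + c by ring, Complex.exp_add]
          ring
        · simp only [if_neg h3]
          ring
      · simp only [if_neg h2]
        by_cases h4 : (j : ℕ) = (j' : ℕ) + 1
        · simp only [if_pos h4]
          by_cases h3 : (a : ℕ) = 0 ∧ (b : ℕ) = 0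
          · simp only [if_pos h3]
            have : ((j : ℕ) : ℂ) = ((j' : ℕ) : ℂ) + 1 := by rw [h4]; push_cast; ring
            rw [this]
            rw [show c * (((j' : ℕ) : ℂ) + 1) = c * ((j' : ℕ) : ℂ) + c by ring, Complex.exp_add,
              Complex.exp_neg]
            field_simp
            ring
          · simp only [if_neg h3]
            ring
        · simp only [if_neg h4]
          ring
  have hdet := congrArg Matrix.det key
  rw [Matrix.det_mul, Matrix.det_mul] at hdet
  exact mul_left_cancel₀ hDdet (hdet.trans (mul_comm _ _))
end

section
/- Let n ≥ 1 and let f : ℝⁿ → ℝⁿ be twice continuously differentiable. Let x₀ = (x₁⁰, …, xₙ⁰) ∈ ℝⁿ be a point at which the Jacobian matrix J(x₀) = (∂f_i/∂x_k(x₀)) is invertible, and let Γ = J(x₀)⁻¹ with entries Γ_{ik}. Let A, B, C be positive real numbers with max_i Σ_{k=1}^n |Γ_{ik}| ≤ A, max_i Σ_{k=1}^n |Γ_{ik} f_k(x₀)| ≤ B, and C ≤ 1/(2AB). Define R = {x ∈ ℝⁿ : max_i |x_i − x_i⁰| ≤ (AC)⁻¹ (1 − √(1 − 2ABC))}. If for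 every x ∈ R and every i = 1, …, n one has Σ_{j=1}^n Σ_{k=1}^n |∂²f_i/(∂x_j ∂x_k)(x)| ≤ C, then the equation f(x) = 0 has a solution x ∈ R. -/
/-!
Iterate the simplified Newton map `g x = x - Γ f(x)`, whose fixed points are the zeros of `f`.
Since `Γ` inverts `f'(x₀)`, we have `g'(z) = Γ (f'(x₀) - f'(z))`, so the second-derivative bound
gives `‖g'(z)‖ ≤ AC ‖z - x₀‖`, hence `‖g b - g a‖ ≤ (AC/2) (‖a - x₀‖ + ‖b - x₀‖) ‖b - a‖`.
By induction, the steps of the iteration are dominated by those of the scalar sequence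
`u₀ = 0`, `u_{k+1} = B + (AC/2) u_k²`, which increases to the smaller root
`r = (AC)⁻¹ (1 - √(1 - 2ABC))` of `B + (AC/2) r² = r`. So the iterates stay in the closed ball
of radius `r` about `x₀` (which is `R`, for the sup norm on `Fin n → ℝ`) and form a Cauchy
sequence, whose limit is a fixed point of `g`.
-/

open Metric Filter

section Segment

variable {E F : Type*} [NormedAddCommGroup E] [NormedSpace ℝ E]
  [NormedAddCommGroup F] [NormedSpace ℝ F]

theorem Convex.norm_image_sub_le_of_norm_fderiv_le_mul_norm_sub {g : E → F} {s : Set E}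
    (hs : Convex ℝ s) {x₀ a b : E} (ha : a ∈ s) (hb : b ∈ s) {K : ℝ} (hK : 0 ≤ K)
    (hg : ∀ z ∈ s, DifferentiableAt ℝ g z) (hg' : ∀ z ∈ s, ‖fderiv ℝ g z‖ ≤ K * ‖z - x₀‖) :
    ‖g b - g a‖ ≤ K / 2 * (‖a - x₀‖ + ‖b - x₀‖) * ‖b - a‖ := by
  set α := ‖a - x₀‖
  set β := ‖b - x₀‖
  set c := ‖b - a‖
  have hseg : ∀ t ∈ Set.Icc (0 : ℝ) 1, a + t • (b - a) ∈ s := fun t ht =>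
    hs.add_smul_sub_mem ha hb ht
  have hφ : ∀ t ∈ Set.Icc (0 : ℝ) 1, HasDerivAt (fun t : ℝ => g (a + t • (b - a)) - g a)
      (fderiv ℝ g (a + t • (b - a)) (b - a)) t := fun t ht => by
    have hline : HasDerivAt (fun t : ℝ => a + t • (b - a)) (b - a) t := by
      simpa using ((hasDerivAt_id t).smul_const (b - a)).const_add a
    exact ((hg _ (hseg t ht)).hasFDerivAt.comp_hasDerivAt t hline).sub_const (g a)
  have hψ : ∀ t : ℝ, HasDerivAt (fun t : ℝ => K * c * (α * t + (β - α) * t ^ 2 / 2))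
      (K * c * ((1 - t) * α + t * β)) t := fun t => by
    refine ((((hasDerivAt_id t).const_mul α).add
      (((hasDerivAt_pow 2 t).const_mul (β - α)).div_const 2)).const_mul (K * c)).congr_deriv ?_
    simp only [Nat.cast_ofNat]
    ring
  have hbound : ∀ t ∈ Set.Ico (0 : ℝ) 1,
      ‖fderiv ℝ g (a + t • (b - a)) (b - a)‖ ≤ K * c * ((1 - t) * α + t * β) := by
    intro t ht
    have hdist : ‖a + t • (b - a) - x₀‖ ≤ (1 - t) * α + t * β := by
      calc ‖a + t • (b - a) - x₀‖ = ‖(1 - t) • (a - x₀) + t • (b - x₀)‖ := by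
            congr 1; module
        _ ≤ (1 - t) * α + t * β := by
            refine (norm_add_le _ _).trans_eq ?_
            rw [norm_smul, norm_smul, Real.norm_of_nonneg (by linarith [ht.2]),
              Real.norm_of_nonneg ht.1]
    calc ‖fderiv ℝ g (a + t • (b - a)) (b - a)‖ ≤ ‖fderiv ℝ g (a + t • (b - a))‖ * c :=
          ContinuousLinearMap.le_opNorm _ _
      _ ≤ K * ((1 - t) * α + t * β) * c := by
          gcongr
          exact (hg' _ (hseg t ⟨ht.1, ht.2.le⟩)).trans (by gcongr)
      _ = K * c * ((1 - t) * α + t * β) := by ring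
  have key := image_norm_le_of_norm_deriv_right_le_deriv_boundary
    (fun t ht => (hφ t ht).continuousAt.continuousWithinAt)
    (fun t ht => (hφ t ⟨ht.1, ht.2.le⟩).hasDerivWithinAt) (by simp) hψ hbound
    (Set.right_mem_Icc.2 zero_le_one)
  calc ‖g b - g a‖ ≤ K * c * (α * 1 + (β - α) * 1 ^ 2 / 2) := by simpa using key
    _ = K / 2 * (α + β) * c := by ring

end Segment

noncomputable def kantorovichSeq (B K : ℝ) : ℕ → ℝ
  | 0 => 0
  | k + 1 => B + K / 2 * kantorovichSeq B K k ^ 2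

namespace kantorovichSeq

variable {B K : ℝ}

@[simp] theorem zero : kantorovichSeq B K 0 = 0 := rfl

theorem succ (k : ℕ) : kantorovichSeq B K (k + 1) = B + K / 2 * kantorovichSeq B K k ^ 2 := rfl

theorem succ_succ_sub (k : ℕ) :
    kantorovichSeq B K (k + 2) - kantorovichSeq B K (k + 1) =
      K / 2 * (kantorovichSeq B K k + kantorovichSeq B K (k + 1)) *
        (kantorovichSeq B K (k + 1) - kantorovichSeq B K k) := by
  rw [succ (k + 1), succ k]
  ring

theorem nonneg (hB : 0 ≤ B) (hK : 0 ≤ K) (k : ℕ) : 0 ≤ kantorovichSeq B K k := by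
  cases k with
  | zero => rfl
  | succ k => rw [succ]; positivity

theorem monotone (hB : 0 ≤ B) (hK : 0 ≤ K) : Monotone (kantorovichSeq B K) := by
  refine monotone_nat_of_le_succ fun k => ?_
  induction k with
  | zero => simpa [succ] using hB
  | succ k ih =>
    rw [succ, succ (k + 1)]
    gcongr
    exact nonneg hB hK k

theorem le_of_add_half_mul_sq_le (hB : 0 ≤ B) (hK : 0 ≤ K) {r : ℝ} (hr : B + K / 2 * r ^ 2 ≤ r)
    (k : ℕ) : kantorovichSeq B K k ≤ r := by
  induction k with
  | zero => exact (by positivity : 0 ≤ B + K / 2 * r ^ 2).trans hr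
  | succ k ih =>
    rw [succ]
    refine le_trans ?_ hr
    gcongr
    exact nonneg hB hK k

end kantorovichSeq

section FixedPoint

variable {E F : Type*} [NormedAddCommGroup E] [NormedSpace ℝ E]
  [NormedAddCommGroup F] [NormedSpace ℝ F]

theorem norm_iterate_sub_le_kantorovichSeq {g : E → E} {x₀ : E} {B K r : ℝ} (hK : 0 ≤ K)
    (hB : ‖g x₀ - x₀‖ ≤ B) (hr : B + K / 2 * r ^ 2 ≤ r)
    (hg : ∀ z ∈ closedBall x₀ r, DifferentiableAt ℝ g z)
    (hg' : ∀ z ∈ closedBall x₀ r, ‖fderiv ℝ g z‖ ≤ K * ‖z - x₀‖) (k : ℕ) :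
    ‖g^[k + 1] x₀ - g^[k] x₀‖ ≤ kantorovichSeq B K (k + 1) - kantorovichSeq B K k ∧
      ‖g^[k] x₀ - x₀‖ ≤ kantorovichSeq B K k := by
  have hB₀ : 0 ≤ B := (norm_nonneg _).trans hB
  have hu₀ := kantorovichSeq.nonneg hB₀ hK
  have hmem : ∀ j, ‖g^[j] x₀ - x₀‖ ≤ kantorovichSeq B K j → g^[j] x₀ ∈ closedBall x₀ r :=
    fun j hj => mem_closedBall_iff_norm.2
      (hj.trans (kantorovichSeq.le_of_add_half_mul_sq_le hB₀ hK hr j))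
  induction k with
  | zero => simpa [kantorovichSeq.succ] using hB
  | succ k ih =>
    obtain ⟨hstep, hdist⟩ := ih
    have hdist' : ‖g^[k + 1] x₀ - x₀‖ ≤ kantorovichSeq B K (k + 1) :=
      (norm_sub_le_norm_sub_add_norm_sub _ (g^[k] x₀) _).trans (by linarith)
    refine ⟨?_, hdist'⟩
    calc ‖g^[k + 2] x₀ - g^[k + 1] x₀‖ = ‖g (g^[k + 1] x₀) - g (g^[k] x₀)‖ := by
          simp only [Function.iterate_succ_apply']
      _ ≤ K / 2 * (‖g^[k] x₀ - x₀‖ + ‖g^[k + 1] x₀ - x₀‖) * ‖g^[k + 1] x₀ - g^[k] x₀‖ :=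
          (convex_closedBall x₀ r).norm_image_sub_le_of_norm_fderiv_le_mul_norm_sub
            (hmem k hdist) (hmem (k + 1) hdist') hK hg hg'
      _ ≤ K / 2 * (kantorovichSeq B K k + kantorovichSeq B K (k + 1)) *
            (kantorovichSeq B K (k + 1) - kantorovichSeq B K k) := by
          gcongr
          exact mul_nonneg (by positivity) (add_nonneg (hu₀ k) (hu₀ (k + 1)))
      _ = kantorovichSeq B K (k + 2) - kantorovichSeq B K (k + 1) :=
          (kantorovichSeq.succ_succ_sub k).symm

theorem exists_fixedPoint_of_norm_fderiv_le_mul_norm_sub [CompleteSpace E] {g : E → E} {x₀ : E}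
    {B K r : ℝ} (hK : 0 ≤ K) (hB : ‖g x₀ - x₀‖ ≤ B) (hr : B + K / 2 * r ^ 2 ≤ r)
    (hg : ∀ z ∈ closedBall x₀ r, DifferentiableAt ℝ g z)
    (hg' : ∀ z ∈ closedBall x₀ r, ‖fderiv ℝ g z‖ ≤ K * ‖z - x₀‖) :
    ∃ x ∈ closedBall x₀ r, g x = x := by
  have hB₀ : 0 ≤ B := (norm_nonneg _).trans hB
  have hiter := norm_iterate_sub_le_kantorovichSeq hK hB hr hg hg'
  have hu_le := kantorovichSeq.le_of_add_half_mul_sq_le hB₀ hK hr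
  have hsummable : Summable fun k => kantorovichSeq B K (k + 1) - kantorovichSeq B K k := by
    refine summable_of_sum_range_le (c := r)
      (fun k => sub_nonneg.2 (kantorovichSeq.monotone hB₀ hK k.le_succ)) fun k => ?_
    rw [Finset.sum_range_sub, kantorovichSeq.zero, sub_zero]
    exact hu_le k
  obtain ⟨x, hx⟩ := cauchySeq_tendsto_of_complete <|
    cauchySeq_of_dist_le_of_summable (f := fun k => g^[k] x₀) _
      (fun k => by simpa [dist_eq_norm'] using (hiter k).1) hsummable
  have hxr : x ∈ closedBall x₀ r := isClosed_closedBall.mem_of_tendsto hx <|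
    Eventually.of_forall fun k => mem_closedBall_iff_norm.2 ((hiter k).2.trans (hu_le k))
  refine ⟨x, hxr, tendsto_nhds_unique ((hg x hxr).continuousAt.tendsto.comp hx) ?_⟩
  simpa only [Function.comp_def, Function.iterate_succ_apply'] using
    hx.comp (tendsto_add_atTop_nat 1)

theorem exists_zero_of_norm_fderiv_sub_le [CompleteSpace E] {f : E → F} {x₀ : E}
    {N : F →L[ℝ] E} {A B C r : ℝ}
    (hN_left : N ∘L fderiv ℝ f x₀ = .id ℝ E) (hN_right : fderiv ℝ f x₀ ∘L N = .id ℝ F)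
    (hNA : ‖N‖ ≤ A) (hNB : ‖N (f x₀)‖ ≤ B) (hC : 0 ≤ C)
    (hf : ∀ z ∈ closedBall x₀ r, DifferentiableAt ℝ f z)
    (hf' : ∀ z ∈ closedBall x₀ r, ‖fderiv ℝ f z - fderiv ℝ f x₀‖ ≤ C * ‖z - x₀‖)
    (hr : B + A * C / 2 * r ^ 2 ≤ r) :
    ∃ x ∈ closedBall x₀ r, f x = 0 := by
  have hA : 0 ≤ A := (norm_nonneg N).trans hNA
  have hg : ∀ z ∈ closedBall x₀ r, HasFDerivAt (fun x => x - N (f x))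
      (N ∘L (fderiv ℝ f x₀ - fderiv ℝ f z)) z := fun z hz => by
    refine ((hasFDerivAt_id z).sub (N.hasFDerivAt.comp z (hf z hz).hasFDerivAt)).congr_fderiv ?_
    rw [ContinuousLinearMap.comp_sub, hN_left]
  obtain ⟨x, hx, hfix⟩ := exists_fixedPoint_of_norm_fderiv_le_mul_norm_sub (K := A * C)
    (by positivity) (by simpa using hNB) hr (fun z hz => (hg z hz).differentiableAt)
    fun z hz => by
      rw [(hg z hz).fderiv]
      calc ‖N ∘L (fderiv ℝ f x₀ - fderiv ℝ f z)‖ ≤ A * (C * ‖z - x₀‖) :=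
            (N.opNorm_comp_le _).trans <| by
              gcongr
              rw [norm_sub_rev]
              exact hf' z hz
        _ = A * C * ‖z - x₀‖ := by ring
  refine ⟨x, hx, ?_⟩
  have hNfx : N (f x) = 0 := by simpa using hfix
  calc f x = (fderiv ℝ f x₀ ∘L N) (f x) := by rw [hN_right]; rfl
    _ = 0 := by simp [hNfx]

end FixedPoint

theorem add_half_mul_sq_eq_self_of_eq {K B r : ℝ} (hK : 0 < K) (hKB : 2 * K * B ≤ 1)
    (hr : r = K⁻¹ * (1 - √(1 - 2 * K * B))) : B + K / 2 * r ^ 2 = r := by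
  have hs := Real.sq_sqrt (by linarith : 0 ≤ 1 - 2 * K * B)
  subst hr
  generalize √(1 - 2 * K * B) = s at hs
  field_simp
  linear_combination hs

section Coordinates

open Matrix

variable {ι κ μ : Type*} [Fintype ι] [Fintype κ] [Fintype μ]

open scoped Matrix.Norms.Operator in
theorem Matrix.opNorm_mulVecLin_le_of_sum_abs_le {M : Matrix ι κ ℝ} {A : ℝ} (hA : 0 ≤ A)
    (hM : ∀ i, ∑ k, |M i k| ≤ A) : ‖ContinuousLinearMap.mk (Matrix.mulVecLin M)‖ ≤ A := by
  rw [← Matrix.linfty_opNorm_eq_opNorm, Matrix.linfty_opNorm_def, ← NNReal.coe_mk A hA,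
    NNReal.coe_le_coe, Finset.sup_le_iff]
  intro i _
  rw [← NNReal.coe_le_coe, NNReal.coe_sum]
  simpa using hM i

theorem ContinuousLinearMap.mk_mulVecLin_inv_isInverse [DecidableEq ι]
    {L : (ι → ℝ) →L[ℝ] (ι → ℝ)} {M : Matrix ι ι ℝ}
    (hLM : M = LinearMap.toMatrix' (L : (ι → ℝ) →ₗ[ℝ] (ι → ℝ))) (hM : IsUnit M) :
    ContinuousLinearMap.mk (mulVecLin M⁻¹) ∘L L = .id ℝ _ ∧
      L ∘L ContinuousLinearMap.mk (mulVecLin M⁻¹) = .id ℝ _ := by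
  have hL : ∀ v, L v = M *ᵥ v := fun v => by
    rw [hLM, ← Matrix.toLin'_apply, Matrix.toLin'_toMatrix']
    rfl
  have hdet := (Matrix.isUnit_iff_isUnit_det M).mp hM
  constructor <;> ext1 v
  · change M⁻¹ *ᵥ L v = v
    rw [hL, mulVec_mulVec, nonsing_inv_mul M hdet, one_mulVec]
  · change L (M⁻¹ *ᵥ v) = v
    rw [hL, mulVec_mulVec, mul_nonsing_inv M hdet, one_mulVec]

theorem setOf_forall_abs_sub_le_eq_closedBall (x₀ : ι → ℝ) {r : ℝ} (hr : 0 ≤ r) :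
    {x : ι → ℝ | ∀ i, |x i - x₀ i| ≤ r} = closedBall x₀ r := by
  ext x
  simp only [Set.mem_ofPred_eq, mem_closedBall, dist_pi_le_iff hr, Real.dist_eq]

theorem Matrix.norm_mulVec_le_of_sum_abs_mul_le {M : Matrix ι κ ℝ} {v : κ → ℝ} {B : ℝ}
    (hB : 0 ≤ B) (hMv : ∀ i, ∑ k, |M i k * v k| ≤ B) : ‖M *ᵥ v‖ ≤ B :=
  (pi_norm_le_iff_of_nonneg hB).2 fun i =>
    (Finset.abs_sum_le_sum_abs _ _).trans (hMv i)

theorem ContinuousLinearMap.norm_le_of_sum_sum_abs_apply_single_le [DecidableEq ι] [DecidableEq κ]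
    (D : (ι → ℝ) →L[ℝ] (κ → ℝ) →L[ℝ] (μ → ℝ)) {C : ℝ} (hC : 0 ≤ C)
    (hD : ∀ i, ∑ j, ∑ k, |D (Pi.single j 1) (Pi.single k 1) i| ≤ C) : ‖D‖ ≤ C := by
  refine D.opNorm_le_bound hC fun u => (D u).opNorm_le_bound (by positivity) fun v => ?_
  have hexpand : ∀ i, D u v i = ∑ j, ∑ k, u j * v k * D (Pi.single j 1) (Pi.single k 1) i := by
    intro i
    conv_lhs => rw [pi_eq_sum_univ' u, pi_eq_sum_univ' v]
    simp only [map_sum, map_smul, _root_.sum_apply, _root_.smul_apply,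
      Finset.sum_apply, Pi.smul_apply, smul_eq_mul, Finset.mul_sum]
    rw [Finset.sum_comm]
    simp only [mul_left_comm, mul_assoc]
  refine (pi_norm_le_iff_of_nonneg (by positivity)).2 fun i => ?_
  calc ‖D u v i‖ ≤ ∑ j, ∑ k, |u j * v k * D (Pi.single j 1) (Pi.single k 1) i| := by
        rw [Real.norm_eq_abs, hexpand]
        exact (Finset.abs_sum_le_sum_abs _ _).trans
          (Finset.sum_le_sum fun j _ => Finset.abs_sum_le_sum_abs _ _)
    _ ≤ ∑ j, ∑ k, ‖u‖ * ‖v‖ * |D (Pi.single j 1) (Pi.single k 1) i| := by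
        gcongr with j _ k _
        rw [abs_mul, abs_mul]
        gcongr
        · exact norm_le_pi_norm u j
        · exact norm_le_pi_norm v k
    _ = ‖u‖ * ‖v‖ * ∑ j, ∑ k, |D (Pi.single j 1) (Pi.single k 1) i| := by
        simp only [Finset.mul_sum]
    _ ≤ ‖u‖ * ‖v‖ * C := by gcongr; exact hD i
    _ = C * ‖u‖ * ‖v‖ := by ring

end Coordinates

theorem stmt19_general (n : ℕ)
    (f : (Fin n → ℝ) → (Fin n → ℝ)) (hf : ContDiff ℝ 2 f)
    (x₀ : Fin n → ℝ)
    (J : Matrix (Fin n) (Fin n) ℝ)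
    (hJdef : ∀ i k, J i k = fderiv ℝ f x₀ (Pi.single k 1) i)
    (hJinv : IsUnit J)
    (Γ : Matrix (Fin n) (Fin n) ℝ) (hΓ : Γ = J⁻¹)
    (A B C : ℝ) (hA : 0 < A) (hB : 0 < B) (hC : 0 < C)
    (hAbound : ∀ i, ∑ k, |Γ i k| ≤ A)
    (hBbound : ∀ i, ∑ k, |Γ i k * f x₀ k| ≤ B)
    (hCsmall : C ≤ 1 / (2 * A * B))
    (R : Set (Fin n → ℝ))
    (hR : R = {x | ∀ i, |x i - x₀ i| ≤
      (A * C)⁻¹ * (1 - Real.sqrt (1 - 2 * A * B * C))})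
    (hCbound : ∀ x ∈ R, ∀ i,
      ∑ j, ∑ k, |fderiv ℝ (fderiv ℝ f) x (Pi.single j 1) (Pi.single k 1) i| ≤ C) :
    ∃ x ∈ R, f x = 0 := by
  subst hR hΓ
  have hABC : 2 * (A * C) * B ≤ 1 := by
    rw [le_div_iff₀ (by positivity)] at hCsmall
    linarith
  set r := (A * C)⁻¹ * (1 - √(1 - 2 * A * B * C)) with hr_def
  have hr : B + A * C / 2 * r ^ 2 = r :=
    add_half_mul_sq_eq_self_of_eq (by positivity) hABC (by rw [hr_def]; ring_nf)
  have hr₀ : 0 ≤ r := hr ▸ by positivity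
  rw [setOf_forall_abs_sub_le_eq_closedBall x₀ hr₀] at hCbound ⊢
  obtain ⟨hN_left, hN_right⟩ :=
    ContinuousLinearMap.mk_mulVecLin_inv_isInverse (Matrix.ext hJdef) hJinv
  have hf' : ∀ z ∈ closedBall x₀ r, ‖fderiv ℝ f z - fderiv ℝ f x₀‖ ≤ C * ‖z - x₀‖ := fun z hz =>
    (convex_closedBall x₀ r).norm_image_sub_le_of_norm_fderiv_le
      (fun y _ => (hf.fderiv_right (m := 1) le_rfl).differentiable one_ne_zero y)
      (fun y hy => ContinuousLinearMap.norm_le_of_sum_sum_abs_apply_single_le _ hC.le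
        (hCbound y hy))
      (mem_closedBall_self hr₀) hz
  exact exists_zero_of_norm_fderiv_sub_le hN_left hN_right
    (Matrix.opNorm_mulVecLin_le_of_sum_abs_le hA.le hAbound)
    (Matrix.norm_mulVec_le_of_sum_abs_mul_le hB.le hBbound) hC.le
    (fun z _ => (hf.differentiable two_ne_zero).differentiableAt) hf' hr.le

/-- Kantorovich's convergence theorem for Newton's method in ℝⁿ:
if `f` is C², the Jacobian `J` at `x₀` is invertible with `Γ = J⁻¹`, and
`A, B, C > 0` satisfy `max_i Σ_k |Γ_{ik}| ≤ A`, `max_i Σ_k |Γ_{ik} f_k(x₀)| ≤ B`,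
`C ≤ 1/(2AB)`, and the second partial derivatives satisfy
`Σ_j Σ_k |∂²f_i/∂x_j∂x_k(x)| ≤ C` for all `x` in the region
`R = {x : max_i |x_i − x_i⁰| ≤ (AC)⁻¹(1 − √(1 − 2ABC))}`, then `f(x) = 0` has a
solution in `R`. -/
theorem stmt19 (n : ℕ) (hn : 1 ≤ n)
    (f : (Fin n → ℝ) → (Fin n → ℝ)) (hf : ContDiff ℝ 2 f)
    (x₀ : Fin n → ℝ)
    (J : Matrix (Fin n) (Fin n) ℝ)
    (hJdef : ∀ i k, J i k = fderiv ℝ f x₀ (Pi.single k 1) i)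
    (hJinv : IsUnit J)
    (Γ : Matrix (Fin n) (Fin n) ℝ) (hΓ : Γ = J⁻¹)
    (A B C : ℝ) (hA : 0 < A) (hB : 0 < B) (hC : 0 < C)
    (hAbound : ∀ i, ∑ k, |Γ i k| ≤ A)
    (hBbound : ∀ i, ∑ k, |Γ i k * f x₀ k| ≤ B)
    (hCsmall : C ≤ 1 / (2 * A * B))
    (R : Set (Fin n → ℝ))
    (hR : R = {x | ∀ i, |x i - x₀ i| ≤
      (A * C)⁻¹ * (1 - Real.sqrt (1 - 2 * A * B * C))})
    (hCbound : ∀ x ∈ R, ∀ i,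
      ∑ j, ∑ k, |fderiv ℝ (fderiv ℝ f) x (Pi.single j 1) (Pi.single k 1) i| ≤ C) :
    ∃ x ∈ R, f x = 0 :=
  stmt19_general n f hf x₀ J hJdef hJinv Γ hΓ A B C hA hB hC hAbound hBbound hCsmall R hR hCbound
end
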